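/- arXiv:1705.04638 — 2 statements merged into one kernel-verified Lean document; each statement's English description precedes it below -/
import Mathlib

section
/- For every integer n ≥ 0, the cubic polynomial q(t) = t³ − (196351 + 51729n)t² + (740712 + 183764n)t − (700260 + 165856n) has negative discriminant; consequently q has exactly one real root and two non-real complex-conjugate roots. -/
/-!
Evaluated at `n`, the discriminant is a quartic polynomial in `n` all of whose coefficients are
negative. For the consequence, a real cubic has a real root `x` by the intermediate value
theorem; dividing it out leaves a real quadratic `w² + p w + q`, and the discriminant of the
cubic equals `(p² - 4q)(x² + p x + q)²`. So `Δ < 0` forces `p² < 4q`, and the quadratic has a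
pair of non-real conjugate roots.
-/

open Filter Polynomial ComplexConjugate

lemma tendsto_monic_cubic_atTop (b c d : ℝ) :
    Tendsto (fun t : ℝ => t ^ 3 + b * t ^ 2 + c * t + d) atTop atTop := by
  have := (C 1 * X ^ 3 + C b * X ^ 2 + C c * X + C d : ℝ[X]).tendsto_atTop_of_leadingCoeff_nonneg
    (by rw [degree_cubic one_ne_zero]; norm_num) (by rw [leadingCoeff_cubic one_ne_zero]; norm_num)
  simpa using this

lemma tendsto_monic_cubic_atBot (b c d : ℝ) :
    Tendsto (fun t : ℝ => t ^ 3 + b * t ^ 2 + c * t + d) atBot atBot := by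
  have := tendsto_neg_atTop_atBot.comp
    ((tendsto_monic_cubic_atTop (-b) c (-d)).comp tendsto_neg_atBot_atTop)
  convert this using 2 with t
  simp only [Function.comp_apply]
  ring

lemma exists_monic_cubic_eq_zero (b c d : ℝ) : ∃ x : ℝ, x ^ 3 + b * x ^ 2 + c * x + d = 0 :=
  Continuous.surjective (by fun_prop) (tendsto_monic_cubic_atTop b c d)
    (tendsto_monic_cubic_atBot b c d) 0

section FactorThroughRoot

variable {R : Type*} [CommRing R] {b c d x : R}

lemma monic_cubic_eq_mul_of_root (hx : x ^ 3 + b * x ^ 2 + c * x + d = 0) (w : R) :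
    w ^ 3 + b * w ^ 2 + c * w + d = (w - x) * (w ^ 2 + (b + x) * w + (c + x * (b + x))) := by
  linear_combination hx

lemma cubic_discrim_eq_of_root (hx : x ^ 3 + b * x ^ 2 + c * x + d = 0) :
    18 * b * c * d - 4 * b ^ 3 * d + b ^ 2 * c ^ 2 - 4 * c ^ 3 - 27 * d ^ 2
      = ((b + x) ^ 2 - 4 * (c + x * (b + x))) * (x ^ 2 + (b + x) * x + (c + x * (b + x))) ^ 2 := by
  linear_combination (-27 * d + 18 * b * c - 4 * b ^ 3 + 27 * (x ^ 3 + b * x ^ 2 + c * x)) * hx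

end FactorThroughRoot

lemma exists_quadratic_eq_mul_conj_of_discrim_neg {p q : ℝ} (hpq : p ^ 2 - 4 * q < 0) :
    ∃ z : ℂ, z.im ≠ 0 ∧ ∀ w : ℂ, w ^ 2 + p * w + q = (w - z) * (w - conj z) := by
  set s := Real.sqrt (4 * q - p ^ 2)
  have hs : 0 < s := Real.sqrt_pos.2 (by linarith)
  have hs_sq : s ^ 2 = 4 * q - p ^ 2 := Real.sq_sqrt (by linarith)
  refine ⟨⟨-p / 2, s / 2⟩, by simpa using hs.ne', fun w => ?_⟩
  have hsum : (⟨-p / 2, s / 2⟩ + conj ⟨-p / 2, s / 2⟩ : ℂ) = -p := by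
    rw [Complex.add_conj]; push_cast; ring
  have hprod : (⟨-p / 2, s / 2⟩ * conj ⟨-p / 2, s / 2⟩ : ℂ) = q := by
    rw [Complex.mul_conj, Complex.normSq_mk]
    exact_mod_cast (by linear_combination hs_sq / 4 : -p / 2 * (-p / 2) + s / 2 * (s / 2) = q)
  linear_combination hsum * w - hprod

theorem exists_roots_of_cubic_discrim_neg {b c d : ℝ}
    (hΔ : 18 * b * c * d - 4 * b ^ 3 * d + b ^ 2 * c ^ 2 - 4 * c ^ 3 - 27 * d ^ 2 < 0) :
    ∃ x : ℝ, ∃ z : ℂ, z.im ≠ 0 ∧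
      ∀ w : ℂ, w ^ 3 + (b : ℂ) * w ^ 2 + (c : ℂ) * w + (d : ℂ) = 0 ↔
        w = (x : ℂ) ∨ w = z ∨ w = conj z := by
  obtain ⟨x, hx⟩ := exists_monic_cubic_eq_zero b c d
  have hquad : (b + x) ^ 2 - 4 * (c + x * (b + x)) < 0 := by
    rw [cubic_discrim_eq_of_root hx] at hΔ
    exact neg_of_mul_neg_left hΔ (sq_nonneg _)
  obtain ⟨z, hz, hfactor⟩ := exists_quadratic_eq_mul_conj_of_discrim_neg hquad
  refine ⟨x, z, hz, fun w => ?_⟩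
  have hxC : (x : ℂ) ^ 3 + b * (x : ℂ) ^ 2 + c * x + d = 0 := by exact_mod_cast hx
  push_cast at hfactor
  rw [monic_cubic_eq_mul_of_root hxC, hfactor w]
  simp only [mul_eq_zero, sub_eq_zero]

/-- For every `n ≥ 0`, the cubic `t³ + bt² + ct + d` with
`b = −(196351+51729n)`, `c = 740712+183764n`, `d = −(700260+165856n)` has negative
discriminant, hence exactly one real root and a pair of non-real conjugate roots. -/
theorem stmt3 (n : ℕ) :
    let b : ℝ := -(196351 + 51729 * (n : ℝ))
    let c : ℝ := 740712 + 183764 * (n : ℝ)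
    let d : ℝ := -(700260 + 165856 * (n : ℝ))
    (18 * b * c * d - 4 * b ^ 3 * d + b ^ 2 * c ^ 2 - 4 * c ^ 3 - 27 * d ^ 2 < 0) ∧
    ∃ x : ℝ, ∃ z : ℂ, z.im ≠ 0 ∧
      ∀ w : ℂ, w ^ 3 + (b : ℂ) * w ^ 2 + (c : ℂ) * w + (d : ℂ) = 0 ↔
        w = (x : ℂ) ∨ w = z ∨ w = (starRingEnd ℂ) z := by
  intro b c d
  have hΔ : 18 * b * c * d - 4 * b ^ 3 * d + b ^ 2 * c ^ 2 - 4 * c ^ 3 - 27 * d ^ 2 < 0 :=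
    calc _ = -(1469203519715708400 * (n : ℝ) ^ 4 + 18981100362844461296 * (n : ℝ) ^ 3
              + 84142961665814563040 * (n : ℝ) ^ 2 + 139741182459075638992 * (n : ℝ)
              + 51174378542895970848) := by ring
      _ < 0 := neg_neg_of_pos (by positivity)
  exact ⟨hΔ, exists_roots_of_cubic_discrim_neg hΔ⟩
end

section
/- Let (p_m, c_m, s_m)_{m≥0} be a sequence with σ(c_{m+1}) = p_m c_m s_m for all m ≥ 0, where σ is an injective substitution. If s_m = ε for all m ≥ n₀ (for some n₀ ≥ 0), then the sequence (p_m, c_m, s_m)_{m ≥ n₀} is periodic: there exists ℓ ≥ 1 such that (p_{m+ℓ}, c_{m+ℓ}, s_{m+ℓ}) = (p_m, c_m, s_m) for all m ≥ n₀. -/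
/-! Once the suffixes vanish, `σ(c_{m+1}) = p_m c_m`, so `c_m` is the last letter of `σ(c_{m+1})`
and `p_m` is the rest of it. Thus `c_m = f(c_{m+1})` for the fixed map `f a = last letter of σ a`,
hence `c_m = f^[k](c_{m+k})`. On a finite alphabet two iterates `f^[i] = f^[j]` with `i < j`
coincide, which makes `c` periodic of period `j - i`; the prefixes and suffixes, being
functions of `c`, inherit the period. -/

section BackwardOrbit

variable {α : Type*} (f : α → α) (u : ℕ → α) {n₀ : ℕ}

theorem eq_iterate_of_eq_comp_succ (h : ∀ m, n₀ ≤ m → u m = f (u (m + 1))) (k : ℕ) :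
    ∀ m, n₀ ≤ m → u m = f^[k] (u (m + k)) := by
  induction k with
  | zero => simp
  | succ k ih =>
    intro m hm
    rw [Function.iterate_succ_apply, ← add_assoc, ← h (m + k) (by omega), ih m hm]

theorem exists_period_of_eq_comp_succ [Finite α] (h : ∀ m, n₀ ≤ m → u m = f (u (m + 1))) :
    ∃ ℓ, 1 ≤ ℓ ∧ ∀ m, n₀ ≤ m → u (m + ℓ) = u m := by
  obtain ⟨i, j, hij, hfij⟩ : ∃ i j : ℕ, i ≠ j ∧ f^[i] = f^[j] :=
    Finite.exists_ne_map_eq_of_infinite fun k => f^[k]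
  wlog hlt : i < j generalizing i j
  · exact this j i hij.symm hfij.symm (by omega)
  refine ⟨j - i, by omega, fun m hm => ?_⟩
  calc u (m + (j - i)) = f^[i] (u (m + j)) := by
        rw [eq_iterate_of_eq_comp_succ f u h i _ (by omega)]
        congr 2
        omega
    _ = u m := by rw [hfij, ← eq_iterate_of_eq_comp_succ f u h j m hm]

end BackwardOrbit

theorem stmt7_general {A : Type*} [Finite A] (σ : A → List A)
    (p : ℕ → List A) (c : ℕ → A) (s : ℕ → List A)
    (hps : ∀ m, σ (c (m + 1)) = p m ++ [c m] ++ s m)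
    (n₀ : ℕ) (hs : ∀ m, n₀ ≤ m → s m = []) :
    ∃ ℓ : ℕ, 1 ≤ ℓ ∧ ∀ m, n₀ ≤ m →
      p (m + ℓ) = p m ∧ c (m + ℓ) = c m ∧ s (m + ℓ) = s m := by
  have hσ : ∀ m, n₀ ≤ m → σ (c (m + 1)) = p m ++ [c m] := fun m hm => by
    rw [hps m, hs m hm, List.append_nil]
  have hc : ∀ m, n₀ ≤ m → c m = (σ (c (m + 1))).getLastD (c (m + 1)) := fun m hm => by
    rw [hσ m hm, List.getLastD_concat]
  have hp : ∀ m, n₀ ≤ m → p m = (σ (c (m + 1))).dropLast := fun m hm => by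
    rw [hσ m hm, List.dropLast_concat]
  obtain ⟨ℓ, hℓ, hper⟩ := exists_period_of_eq_comp_succ (fun a => (σ a).getLastD a) c hc
  refine ⟨ℓ, hℓ, fun m hm => ⟨?_, hper m hm, by rw [hs m hm, hs (m + ℓ) (by omega)]⟩⟩
  rw [hp m hm, hp (m + ℓ) (by omega), Nat.add_right_comm, hper (m + 1) (by omega)]

/-- If `σ` is an injective substitution on a finite alphabet, `σ(c_{m+1}) = p_m c_m s_m`
for all `m`, and the suffixes `s_m` are empty from `n₀` on, then the prefix-suffix
sequence is periodic from `n₀` on. -/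
theorem stmt7 {A : Type*} [Finite A] (σ : A → List A) (hne : ∀ a, σ a ≠ [])
    (hinj : Function.Injective σ)
    (p : ℕ → List A) (c : ℕ → A) (s : ℕ → List A)
    (hps : ∀ m, σ (c (m + 1)) = p m ++ [c m] ++ s m)
    (n₀ : ℕ) (hs : ∀ m, n₀ ≤ m → s m = []) :
    ∃ ℓ : ℕ, 1 ≤ ℓ ∧ ∀ m, n₀ ≤ m →
      p (m + ℓ) = p m ∧ c (m + ℓ) = c m ∧ s (m + ℓ) = s m :=
  stmt7_general σ p c s hps n₀ hs
end
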